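/- arXiv:2312.07045 — 4 statements merged into one kernel-verified Lean document; each statement's English description precedes it below -/
import Mathlib

section
/- Let V be a finite-dimensional real inner product space and d0 : V → V^k, d1 : V^k → V^p linear maps with d1 ∘ d0 = 0, and □ := d0 ∘ d0* + d1* ∘ d1. Suppose there are constants C, C' > 0 and λ ≥ 1 such that: (a) ‖d0 u‖ ≥ (C/λ)‖u‖ for all u ∈ V, and (b) every nonzero eigenvalue of d1* ∘ d1 restricted to V^k is at least C'/λ. Then every nonzero eigenvalue μ of □ satisfies μ ≥ min(C²/λ², C'/λ). -/
/-!
Since `d1 ∘ d0 = 0`, the two summands `A = d0 d0*` and `B = d1* d1` of `□` annihilate each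
other (`B A = 0` directly, `A B = 0` by taking adjoints). Applying `A` and `B` to `□ v = μ v`
shows that `A v` and `B v` are eigenvectors of `A` and `B` for `μ`, and one of them is nonzero,
so `μ` is an eigenvalue of `A` or of `B`. Nonzero eigenvalues of `d0 d0*` are eigenvalues of
`d0* d0`, and those are at least `(C/λ)²` by (a); for `B` we use (b).
-/

open Module End

section Eigenvalues

variable {K M N : Type*} [Field K] [AddCommGroup M] [Module K M] [AddCommGroup N] [Module K N]

theorem Module.End.hasEigenvalue_of_apply_eq_smul {f : End K M} {μ : K} {x : M}
    (hx : x ≠ 0) (h : f x = μ • x) : f.HasEigenvalue μ :=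
  hasEigenvalue_of_hasEigenvector ⟨mem_eigenspace_iff.mpr h, hx⟩

theorem Module.End.hasEigenvalue_comp_comm {f : M →ₗ[K] N} {g : N →ₗ[K] M} {μ : K}
    (hμ : μ ≠ 0) (h : HasEigenvalue (f ∘ₗ g) μ) : HasEigenvalue (g ∘ₗ f) μ := by
  obtain ⟨v, hv⟩ := h.exists_hasEigenvector
  have hfgv : f (g v) = μ • v := hv.apply_eq_smul
  have hgv : g v ≠ 0 := fun h0 => by
    rw [h0, map_zero, eq_comm, smul_eq_zero] at hfgv
    exact hfgv.elim hμ hv.2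
  refine hasEigenvalue_of_apply_eq_smul hgv ?_
  change g (f (g v)) = μ • g v
  rw [hfgv, map_smul]

theorem Module.End.hasEigenvalue_or_of_hasEigenvalue_add {A B : End K M} {μ : K}
    (hAB : A * B = 0) (hBA : B * A = 0) (hμ : μ ≠ 0) (h : (A + B).HasEigenvalue μ) :
    A.HasEigenvalue μ ∨ B.HasEigenvalue μ := by
  obtain ⟨v, hv⟩ := h.exists_hasEigenvector
  have hsum : A v + B v = μ • v := hv.apply_eq_smul
  have hAA : A (A v) = μ • A v := by
    have := congrArg A hsum
    rwa [map_add, ← mul_apply A B, hAB, LinearMap.zero_apply, add_zero, map_smul] at this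
  have hBB : B (B v) = μ • B v := by
    have := congrArg B hsum
    rwa [map_add, ← mul_apply B A, hBA, LinearMap.zero_apply, zero_add, map_smul] at this
  by_cases hAv : A v = 0
  · have hBv : B v ≠ 0 := by
      rw [hAv, zero_add] at hsum
      rw [hsum]
      exact smul_ne_zero hμ hv.2
    exact .inr (hasEigenvalue_of_apply_eq_smul hBv hBB)
  · exact .inl (hasEigenvalue_of_apply_eq_smul hAv hAA)

end Eigenvalues

section InnerProduct

variable {E F : Type*} [NormedAddCommGroup E] [InnerProductSpace ℝ E] [FiniteDimensional ℝ E]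
  [NormedAddCommGroup F] [InnerProductSpace ℝ F] [FiniteDimensional ℝ F]

theorem LinearMap.sq_le_of_hasEigenvalue_adjoint_comp_self (T : E →ₗ[ℝ] F) {c μ : ℝ}
    (hc : 0 ≤ c) (hT : ∀ u, c * ‖u‖ ≤ ‖T u‖) (hμ : HasEigenvalue (T.adjoint ∘ₗ T) μ) :
    c ^ 2 ≤ μ := by
  obtain ⟨u, hu⟩ := hμ.exists_hasEigenvector
  have hnorm : ‖T u‖ ^ 2 = μ * ‖u‖ ^ 2 := by
    rw [← real_inner_self_eq_norm_sq, ← real_inner_self_eq_norm_sq,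
      ← LinearMap.adjoint_inner_left, ← LinearMap.comp_apply, hu.apply_eq_smul,
      real_inner_smul_left]
  have hpos : 0 < ‖u‖ ^ 2 := pow_pos (norm_pos_iff.mpr hu.2) 2
  have hsq : (c * ‖u‖) ^ 2 ≤ ‖T u‖ ^ 2 := pow_le_pow_left₀ (by positivity) (hT u) 2
  rw [hnorm, mul_pow] at hsq
  exact le_of_mul_le_mul_right hsq hpos

variable {G : Type*} [NormedAddCommGroup G] [InnerProductSpace ℝ G] [FiniteDimensional ℝ G]

theorem LinearMap.comp_adjoint_mul_adjoint_comp_eq_zero {d0 : E →ₗ[ℝ] F} {d1 : F →ₗ[ℝ] G}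
    (h : d1 ∘ₗ d0 = 0) : (d0 ∘ₗ d0.adjoint) * (d1.adjoint ∘ₗ d1) = 0 := by
  have h' : d0.adjoint ∘ₗ d1.adjoint = 0 := by
    rw [← LinearMap.adjoint_comp, h, map_zero]
  change d0 ∘ₗ (d0.adjoint ∘ₗ d1.adjoint) ∘ₗ d1 = 0
  rw [h', LinearMap.zero_comp, LinearMap.comp_zero]

theorem LinearMap.adjoint_comp_mul_comp_adjoint_eq_zero {d0 : E →ₗ[ℝ] F} {d1 : F →ₗ[ℝ] G}
    (h : d1 ∘ₗ d0 = 0) : (d1.adjoint ∘ₗ d1) * (d0 ∘ₗ d0.adjoint) = 0 := by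
  change d1.adjoint ∘ₗ (d1 ∘ₗ d0) ∘ₗ d0.adjoint = 0
  rw [h, LinearMap.zero_comp, LinearMap.comp_zero]

end InnerProduct

theorem stmt_3_general {V : Type*} [NormedAddCommGroup V] [InnerProductSpace ℝ V]
    [FiniteDimensional ℝ V] {k p : ℕ}
    (d0 : V →ₗ[ℝ] PiLp 2 fun _ : Fin k => V)
    (d1 : (PiLp 2 fun _ : Fin k => V) →ₗ[ℝ] PiLp 2 fun _ : Fin p => V)
    (hcomp : d1 ∘ₗ d0 = 0)
    (box : (PiLp 2 fun _ : Fin k => V) →ₗ[ℝ] PiLp 2 fun _ : Fin k => V)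
    (hbox : box = d0 ∘ₗ LinearMap.adjoint d0 + LinearMap.adjoint d1 ∘ₗ d1)
    (C C' lam : ℝ) (hC : 0 < C) (hlam : 1 ≤ lam)
    (ha : ∀ u : V, C / lam * ‖u‖ ≤ ‖d0 u‖)
    (hb : ∀ μ : ℝ, μ ≠ 0 →
      Module.End.HasEigenvalue (LinearMap.adjoint d1 ∘ₗ d1) μ → C' / lam ≤ μ) :
    ∀ μ : ℝ, μ ≠ 0 → Module.End.HasEigenvalue box μ →
      min (C ^ 2 / lam ^ 2) (C' / lam) ≤ μ := by
  intro μ hμ hμbox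
  subst hbox
  rcases hasEigenvalue_or_of_hasEigenvalue_add (LinearMap.comp_adjoint_mul_adjoint_comp_eq_zero hcomp)
    (LinearMap.adjoint_comp_mul_comp_adjoint_eq_zero hcomp) hμ hμbox with hA | hB
  · have hc : 0 ≤ C / lam := div_nonneg hC.le (zero_le_one.trans hlam)
    have := d0.sq_le_of_hasEigenvalue_adjoint_comp_self hc ha (hasEigenvalue_comp_comm hμ hA)
    rw [div_pow] at this
    exact (min_le_left _ _).trans this
  · exact (min_le_right _ _).trans (hb μ hμ hB)

/-- Lower bound on the nonzero eigenvalues of the box operator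
`□ = d0 ∘ d0* + d1* ∘ d1` from (a) the lower bound `‖d0 u‖ ≥ (C/λ)‖u‖` and (b) a lower
bound `C'/λ` on the nonzero eigenvalues of `d1* ∘ d1`: every nonzero eigenvalue `μ` of `□`
satisfies `μ ≥ min (C²/λ², C'/λ)`. -/
theorem stmt_3 {V : Type*} [NormedAddCommGroup V] [InnerProductSpace ℝ V]
    [FiniteDimensional ℝ V] {k p : ℕ}
    (d0 : V →ₗ[ℝ] PiLp 2 fun _ : Fin k => V)
    (d1 : (PiLp 2 fun _ : Fin k => V) →ₗ[ℝ] PiLp 2 fun _ : Fin p => V)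
    (hcomp : d1 ∘ₗ d0 = 0)
    (box : (PiLp 2 fun _ : Fin k => V) →ₗ[ℝ] PiLp 2 fun _ : Fin k => V)
    (hbox : box = d0 ∘ₗ LinearMap.adjoint d0 + LinearMap.adjoint d1 ∘ₗ d1)
    (C C' lam : ℝ) (hC : 0 < C) (hC' : 0 < C') (hlam : 1 ≤ lam)
    (ha : ∀ u : V, C / lam * ‖u‖ ≤ ‖d0 u‖)
    (hb : ∀ μ : ℝ, μ ≠ 0 →
      Module.End.HasEigenvalue (LinearMap.adjoint d1 ∘ₗ d1) μ → C' / lam ≤ μ) :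
    ∀ μ : ℝ, μ ≠ 0 → Module.End.HasEigenvalue box μ →
      min (C ^ 2 / lam ^ 2) (C' / lam) ≤ μ :=
  stmt_3_general d0 d1 hcomp box hbox C C' lam hC hlam ha hb
end

section
/- Let (X, ‖·‖) be a Banach space and (w_m)_{m≥0} a sequence in X, and suppose there is a bilinear-type correction s : X × X → X and elements W_m defined by W_0 := w_0 and W_{m+1} := W_m + w_{m+1} + s(W_m, w_{m+1}), with ‖w_m‖ ≤ ε_m^{19/20} and ‖s(W_m, w_{m+1})‖ ≤ C ‖W_m‖ ‖w_{m+1}‖^{9/10·(20/19)} for a constant C, where ε_m = ε_0^{(6/5)^m}. If ε_0 is small enough (depending on C), then ‖W_{m+1} − W_m‖ ≤ ε_{m+1}^{3/4} for all m, (W_m) is Cauchy, and its limit W satisfies ‖W‖ ≤ ε_0^{3/4}. -/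
/-!
Write `η = ε₀^{3/4}` and `t = ε₀^{3/20} = η^{1/5}`. While `‖W_m‖ ≤ 1`, the increment
`w_{m+1} + s(W_m, w_{m+1})` has norm at most `(1 + C) ε_{m+1}^{9/10} ≤ ε_{m+1}^{3/4}` once
`(1 + C) t ≤ 1`. By Bernoulli's inequality `(6/5)^{m+1} ≥ 6/5 + m/5`, so
`ε_{m+1}^{3/4} ≤ η^{6/5} t^m`, and for `t ≤ 1/3` these increments together with
`‖W_0‖ ≤ ε₀^{19/20} ≤ η t` add up to at most `η`. A bootstrap on `‖W_m‖ ≤ η` closes the argument.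
-/

open Real Finset Filter Topology

theorem norm_le_of_norm_sub_le_of_tsum_le {E : Type*} [SeminormedAddCommGroup E]
    {W : ℕ → E} {a : ℕ → ℝ} {R : ℝ} (ha₀ : ∀ k, 0 ≤ a k) (ha : Summable a)
    (hR : ‖W 0‖ + ∑' k, a k ≤ R) (hstep : ∀ m, ‖W m‖ ≤ R → ‖W (m + 1) - W m‖ ≤ a m)
    (m : ℕ) : ‖W m‖ ≤ R := by
  have hpartial : ∀ n, ‖W 0‖ + ∑ k ∈ range n, a k ≤ R := fun n =>
    (add_le_add le_rfl (ha.sum_le_tsum _ fun k _ => ha₀ k)).trans hR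
  suffices h : ∀ n, ‖W n‖ ≤ ‖W 0‖ + ∑ k ∈ range n, a k from (h m).trans (hpartial m)
  intro n
  induction n with
  | zero => simp
  | succ n ih =>
    calc ‖W (n + 1)‖ ≤ ‖W n‖ + ‖W (n + 1) - W n‖ := norm_le_insert' _ _
      _ ≤ (‖W 0‖ + ∑ k ∈ range n, a k) + a n :=
          add_le_add ih (hstep n (ih.trans (hpartial n)))
      _ = ‖W 0‖ + ∑ k ∈ range (n + 1), a k := by rw [sum_range_succ, add_assoc]

theorem rpow_one_add_pow_succ_le {x r : ℝ} (hx₀ : 0 < x) (hx₁ : x ≤ 1) (hr : 0 ≤ r)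
    (m : ℕ) : x ^ ((1 + r) ^ (m + 1)) ≤ x ^ (1 + r) * (x ^ r) ^ m := by
  have hbernoulli : (1 + r) + m * r ≤ (1 + r) ^ (m + 1) :=
    calc (1 + r) + m * r ≤ (1 + r) * (1 + m * r) := by nlinarith [mul_nonneg m.cast_nonneg hr]
      _ ≤ (1 + r) * (1 + r) ^ m := by gcongr; exact one_add_mul_le_pow (by linarith) m
      _ = (1 + r) ^ (m + 1) := (pow_succ' _ _).symm
  rw [← rpow_natCast (x ^ r), ← rpow_mul hx₀.le, ← rpow_add hx₀, mul_comm r]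
  exact rpow_le_rpow_of_exponent_ge hx₀ hx₁ hbernoulli

theorem tsum_rpow_six_fifths_pow_le {ε₀ : ℝ} (hε₀ : 0 < ε₀) (hsmall : ε₀ ^ (3 / 20 : ℝ) ≤ 1 / 3) :
    Summable (fun m : ℕ => (ε₀ ^ ((6 / 5 : ℝ) ^ (m + 1))) ^ (3 / 4 : ℝ)) ∧
      ε₀ ^ (19 / 20 : ℝ) + ∑' m : ℕ, (ε₀ ^ ((6 / 5 : ℝ) ^ (m + 1))) ^ (3 / 4 : ℝ)
        ≤ ε₀ ^ (3 / 4 : ℝ) := by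
  set η := ε₀ ^ (3 / 4 : ℝ) with hη
  set t := ε₀ ^ (3 / 20 : ℝ) with ht
  have hε₀₁ : ε₀ ≤ 1 :=
    ((rpow_lt_one_iff' hε₀.le (by norm_num : (0 : ℝ) < 3 / 20)).1 (by linarith)).le
  have hη₀ : 0 < η := rpow_pos_of_pos hε₀ _
  have hη₁ : η ≤ 1 := rpow_le_one hε₀.le hε₀₁ (by norm_num)
  have ht₀ : 0 ≤ t := (rpow_pos_of_pos hε₀ _).le
  have hswap : ∀ p : ℝ, (ε₀ ^ p) ^ (3 / 4 : ℝ) = η ^ p := fun p => by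
    rw [hη, ← rpow_mul hε₀.le, ← rpow_mul hε₀.le, mul_comm]
  have hηt : η ^ (1 / 5 : ℝ) = t := by rw [hη, ht, ← rpow_mul hε₀.le]; norm_num
  have hηt_pow : η ^ (6 / 5 : ℝ) = η * t := by
    rw [hη, ht, ← rpow_mul hε₀.le, ← rpow_add hε₀]; norm_num
  have hbound : ∀ m : ℕ,
      (ε₀ ^ ((6 / 5 : ℝ) ^ (m + 1))) ^ (3 / 4 : ℝ) ≤ η ^ (6 / 5 : ℝ) * t ^ m := by
    intro m
    have h := rpow_one_add_pow_succ_le hη₀ hη₁ (r := 1 / 5) (by norm_num) m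
    rw [show (1 + 1 / 5 : ℝ) = 6 / 5 by norm_num, hηt] at h
    rwa [hswap]
  have hgeom : Summable (fun m : ℕ => η ^ (6 / 5 : ℝ) * t ^ m) :=
    (summable_geometric_of_lt_one ht₀ (by linarith)).mul_left _
  have hsum : Summable (fun m : ℕ => (ε₀ ^ ((6 / 5 : ℝ) ^ (m + 1))) ^ (3 / 4 : ℝ)) :=
    hgeom.of_nonneg_of_le (fun _ => by positivity) hbound
  refine ⟨hsum, ?_⟩
  have hfirst : ε₀ ^ (19 / 20 : ℝ) ≤ η * t := by
    rw [hη, ht, ← rpow_add hε₀]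
    exact rpow_le_rpow_of_exponent_ge hε₀ hε₀₁ (by norm_num)
  have htail : ∑' m : ℕ, (ε₀ ^ ((6 / 5 : ℝ) ^ (m + 1))) ^ (3 / 4 : ℝ) ≤ η * t * (1 - t)⁻¹ := by
    calc _ ≤ ∑' m : ℕ, η ^ (6 / 5 : ℝ) * t ^ m := hsum.tsum_le_tsum hbound hgeom
      _ = η * t * (1 - t)⁻¹ := by
          rw [tsum_mul_left, tsum_geometric_of_lt_one ht₀ (by linarith), hηt_pow]
  have hinv : (1 - t)⁻¹ ≤ 3 / 2 := by
    rw [inv_le_comm₀ (by linarith) (by norm_num)]; linarith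
  calc _ ≤ η * t + η * t * (1 - t)⁻¹ := add_le_add hfirst htail
    _ ≤ η * t + η * t * (3 / 2) := by gcongr
    _ = η * (5 / 2 * t) := by ring
    _ ≤ η := mul_le_of_le_one_right hη₀.le (by linarith)

theorem norm_add_le_rpow_of_norm_le_mul_rpow {X : Type*} [SeminormedAddCommGroup X]
    {C e : ℝ} {x y z : X} (hC : 0 ≤ C) (he₀ : 0 ≤ e) (he₁ : e ≤ 1)
    (hsmall : (1 + C) * e ^ (3 / 20 : ℝ) ≤ 1) (hx : ‖x‖ ≤ 1) (hy : ‖y‖ ≤ e ^ (19 / 20 : ℝ))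
    (hz : ‖z‖ ≤ C * ‖x‖ * ‖y‖ ^ ((9 : ℝ) / 10 * (20 / 19))) :
    ‖y + z‖ ≤ e ^ (3 / 4 : ℝ) := by
  have hy' : ‖y‖ ≤ e ^ (9 / 10 : ℝ) :=
    hy.trans (rpow_le_rpow_of_exponent_ge' he₀ he₁ (by norm_num) (by norm_num))
  have hy_pow : ‖y‖ ^ ((9 : ℝ) / 10 * (20 / 19)) ≤ e ^ (9 / 10 : ℝ) := by
    calc ‖y‖ ^ ((9 : ℝ) / 10 * (20 / 19)) ≤ (e ^ (19 / 20 : ℝ)) ^ ((9 : ℝ) / 10 * (20 / 19)) :=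
          rpow_le_rpow (norm_nonneg _) hy (by norm_num)
      _ = e ^ (9 / 10 : ℝ) := by rw [← rpow_mul he₀]; norm_num
  have hz' : ‖z‖ ≤ C * e ^ (9 / 10 : ℝ) :=
    calc ‖z‖ ≤ C * 1 * e ^ (9 / 10 : ℝ) := hz.trans (by gcongr)
      _ = C * e ^ (9 / 10 : ℝ) := by rw [mul_one]
  calc ‖y + z‖ ≤ ‖y‖ + ‖z‖ := norm_add_le _ _
    _ ≤ (1 + C) * e ^ (3 / 20 : ℝ) * e ^ (3 / 4 : ℝ) := by
        rw [mul_assoc, ← rpow_add' he₀ (by norm_num)]; norm_num; linarith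
    _ ≤ e ^ (3 / 4 : ℝ) := mul_le_of_le_one_left (by positivity) hsmall

/-- Abstract convergence of the composed conjugacies in the KAM scheme.
With `ε_m = ε₀^{(6/5)^m}`, `W_0 = w_0`, `W_{m+1} = W_m + w_{m+1} + s(W_m, w_{m+1})`,
`‖w_m‖ ≤ ε_m^{19/20}` and `‖s(W_m, w_{m+1})‖ ≤ C‖W_m‖‖w_{m+1}‖^{(9/10)(20/19)}`, if `ε₀` is
small enough (depending only on `C`) then `‖W_{m+1} − W_m‖ ≤ ε_{m+1}^{3/4}`, `(W_m)` is
Cauchy, and its limit `W` satisfies `‖W‖ ≤ ε₀^{3/4}`. -/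
theorem stmt_13 {X : Type*} [NormedAddCommGroup X] [NormedSpace ℝ X] [CompleteSpace X]
    (C : ℝ) (hC : 0 ≤ C) :
    ∃ ε₁ > (0 : ℝ), ∀ ε₀ : ℝ, 0 < ε₀ → ε₀ < ε₁ →
      ∀ (w W : ℕ → X) (s : X → X → X),
        W 0 = w 0 →
        (∀ m, W (m + 1) = W m + w (m + 1) + s (W m) (w (m + 1))) →
        (∀ m, ‖w m‖ ≤ (ε₀ ^ ((6 / 5 : ℝ) ^ m)) ^ ((19 : ℝ) / 20)) →
        (∀ m, ‖s (W m) (w (m + 1))‖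
          ≤ C * ‖W m‖ * ‖w (m + 1)‖ ^ ((9 : ℝ) / 10 * (20 / 19))) →
        (∀ m, ‖W (m + 1) - W m‖ ≤ (ε₀ ^ ((6 / 5 : ℝ) ^ (m + 1))) ^ ((3 : ℝ) / 4)) ∧
        CauchySeq W ∧
        ∃ Wlim : X, Filter.Tendsto W Filter.atTop (nhds Wlim) ∧
          ‖Wlim‖ ≤ ε₀ ^ ((3 : ℝ) / 4) := by
  refine ⟨(1 / (3 * (1 + C))) ^ (3 / 20 : ℝ)⁻¹, by positivity, ?_⟩
  intro ε₀ hε₀ hε₀ε₁ w W s hW0 hWsucc hw hs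
  have ht : ε₀ ^ (3 / 20 : ℝ) < 1 / (3 * (1 + C)) :=
    (lt_rpow_inv_iff_of_pos hε₀.le (by positivity) (by norm_num)).1 hε₀ε₁
  have ht₃ : ε₀ ^ (3 / 20 : ℝ) ≤ 1 / 3 :=
    ht.le.trans (one_div_le_one_div_of_le (by norm_num) (by linarith))
  have htC : (1 + C) * ε₀ ^ (3 / 20 : ℝ) ≤ 1 := by
    rw [lt_div_iff₀ (by positivity)] at ht; linarith
  have hε₀₁ : ε₀ ≤ 1 :=
    ((rpow_lt_one_iff' hε₀.le (by norm_num : (0 : ℝ) < 3 / 20)).1 (by linarith)).le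
  obtain ⟨hsum, htsum⟩ := tsum_rpow_six_fifths_pow_le hε₀ ht₃
  have hstep : ∀ m, ‖W m‖ ≤ ε₀ ^ (3 / 4 : ℝ) →
      ‖W (m + 1) - W m‖ ≤ (ε₀ ^ ((6 / 5 : ℝ) ^ (m + 1))) ^ (3 / 4 : ℝ) := by
    intro m hWm
    have he : ε₀ ^ ((6 / 5 : ℝ) ^ (m + 1)) ≤ ε₀ :=
      rpow_le_self_of_le_one hε₀.le hε₀₁ (one_le_pow₀ (by norm_num))
    rw [hWsucc m, add_assoc, add_sub_cancel_left]
    have hW_le_one : ‖W m‖ ≤ 1 := hWm.trans (rpow_le_one hε₀.le hε₀₁ (by norm_num))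
    refine norm_add_le_rpow_of_norm_le_mul_rpow hC (by positivity) (he.trans hε₀₁)
      (htC.trans' ?_) hW_le_one (hw (m + 1)) (hs m)
    gcongr
  have hW0_le : ‖W 0‖ ≤ ε₀ ^ (19 / 20 : ℝ) := by simpa [hW0] using hw 0
  have hbounded : ∀ m, ‖W m‖ ≤ ε₀ ^ (3 / 4 : ℝ) :=
    norm_le_of_norm_sub_le_of_tsum_le (fun _ => by positivity) hsum (by linarith) hstep
  have hinc : ∀ m, ‖W (m + 1) - W m‖ ≤ (ε₀ ^ ((6 / 5 : ℝ) ^ (m + 1))) ^ (3 / 4 : ℝ) :=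
    fun m => hstep m (hbounded m)
  have hcauchy : CauchySeq W :=
    cauchySeq_of_dist_le_of_summable _ (fun m => by rw [dist_comm, dist_eq_norm]; exact hinc m) hsum
  obtain ⟨Wlim, hlim⟩ := cauchySeq_tendsto_of_complete hcauchy
  exact ⟨hinc, hcauchy, Wlim, hlim, le_of_tendsto' hlim.norm hbounded⟩
end

section
/- Let G be a group acting by unitary operators on a Hilbert space H, with generators γ_1, …, γ_ν and the convention γ_{i+ν} := γ_i^{−1}, k = 2ν. Assume G is abelian, define L_i v := v − π(γ_i)_* v, and let d0 v := (L_i v)_{1≤i≤k}, d1 V := (L_j v_i − L_i v_j)_{i<j} for V = (v_i) ∈ H^k, where the adjoint of d1 uses the antisymmetric product structure. Then the box operator □ := d0 ∘ d0* + d1* ∘ d1 acts diagonally: □ V = ((Σ_{j=1}^k L_j* L_j) v_i)_{1≤i≤k}. -/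
/-!
Pairing with a test vector `U`, `⟪d1* d1 V, U⟫ = ∑_{i<j} ⟪L_j v_i - L_i v_j, L_j u_i - L_i u_j⟫`.
The left factor is antisymmetric in `(i, j)`, so this is the sum over all ordered pairs of
`⟪L_j v_i - L_i v_j, L_j u_i⟫`, i.e. `(d1* d1 V)_i = ∑_j L_j* (L_j v_i - L_i v_j)`.
Unitarity gives `L_j* = 1 - ρ(γ_j⁻¹)`, which commutes with `L_i` because `G` is abelian; hence
`(d0 d0* V)_i = L_i ∑_j L_j* v_j = ∑_j L_j* L_i v_j` cancels the cross terms.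
-/

instance PiLp.instCompleteSpace' {ι : Type*} [Fintype ι] (β : ι → Type*)
    [∀ i, UniformSpace (β i)] [∀ i, CompleteSpace (β i)] :
    CompleteSpace (PiLp 2 β) :=
  PiLp.completeSpace 2 β

open ContinuousLinearMap Finset

theorem Finset.sum_subtype_lt_add_swap {ι M : Type*} [Fintype ι] [LinearOrder ι]
    [AddCommMonoid M] (g : ι → ι → M) (hg : ∀ i, g i i = 0) :
    ∑ q : {q : ι × ι // q.1 < q.2}, (g q.1.1 q.1.2 + g q.1.2 q.1.1) = ∑ i, ∑ j, g i j := by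
  have hsplit : ∀ i j, g i j = (if i < j then g i j else 0) + if j < i then g i j else 0 := by
    intro i j
    rcases lt_trichotomy i j with h | rfl | h
    · simp [h, h.not_gt]
    · simp [hg]
    · simp [h, h.not_gt]
  calc ∑ q : {q : ι × ι // q.1 < q.2}, (g q.1.1 q.1.2 + g q.1.2 q.1.1)
      = ∑ i, ∑ j, if i < j then g i j + g j i else 0 := by
        rw [← Fintype.sum_prod_type', ← Finset.sum_filter]
        exact (Finset.sum_subtype _ (by simp) (fun q : ι × ι => g q.1 q.2 + g q.2 q.1)).symm
    _ = ∑ i, ∑ j, g i j := by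
        simp_rw [ite_add_zero, sum_add_distrib,
          sum_comm (f := fun i j => if i < j then g j i else 0), ← sum_add_distrib, ← hsplit]

section Box

variable {𝕜 H ι : Type*} [RCLike 𝕜] [NormedAddCommGroup H] [InnerProductSpace 𝕜 H]
  [CompleteSpace H] [Fintype ι] (L : ι → H →L[𝕜] H)

theorem adjoint_d0_apply (d0 : H →L[𝕜] PiLp 2 fun _ : ι => H) (hd0 : ∀ v i, d0 v i = L i v)
    (V : PiLp 2 fun _ : ι => H) : adjoint d0 V = ∑ j, adjoint (L j) (V j) := by
  refine ext_inner_right 𝕜 fun u => ?_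
  simp only [adjoint_inner_left, PiLp.inner_apply, hd0, sum_inner]

variable [LinearOrder ι]

theorem adjoint_d1_comp_d1_apply
    (d1 : (PiLp 2 fun _ : ι => H) →L[𝕜] PiLp 2 fun _ : {q : ι × ι // q.1 < q.2} => H)
    (hd1 : ∀ V q, d1 V q = L q.1.2 (V q.1.1) - L q.1.1 (V q.1.2))
    (V : PiLp 2 fun _ : ι => H) (i : ι) :
    adjoint d1 (d1 V) i = ∑ j, adjoint (L j) (L j (V i) - L i (V j)) := by
  suffices adjoint d1 (d1 V) =
      WithLp.toLp 2 fun i => ∑ j, adjoint (L j) (L j (V i) - L i (V j)) by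
    rw [this]
  refine ext_inner_right 𝕜 fun U => ?_
  rw [adjoint_inner_left, PiLp.inner_apply, PiLp.inner_apply]
  simp only [hd1, sum_inner, adjoint_inner_left]
  rw [← Finset.sum_subtype_lt_add_swap
    (fun i j => inner 𝕜 (L j (V i) - L i (V j)) (L j (U i))) (by simp)]
  refine sum_congr rfl fun q _ => ?_
  rw [inner_sub_right, sub_eq_add_neg, ← inner_neg_left, neg_sub]

theorem box_apply_of_commute (hcomm : ∀ a b, Commute (L a) (adjoint (L b)))
    (d0 : H →L[𝕜] PiLp 2 fun _ : ι => H) (hd0 : ∀ v i, d0 v i = L i v)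
    (d1 : (PiLp 2 fun _ : ι => H) →L[𝕜] PiLp 2 fun _ : {q : ι × ι // q.1 < q.2} => H)
    (hd1 : ∀ V q, d1 V q = L q.1.2 (V q.1.1) - L q.1.1 (V q.1.2))
    (V : PiLp 2 fun _ : ι => H) (i : ι) :
    (d0 (adjoint d0 V) + adjoint d1 (d1 V)) i = ∑ j, adjoint (L j) (L j (V i)) := by
  have hcomm_apply : ∀ a b v, L a (adjoint (L b) v) = adjoint (L b) (L a v) := fun a b v =>
    congrArg (fun T : H →L[𝕜] H => T v) (hcomm a b).eq
  rw [PiLp.add_apply, hd0, adjoint_d0_apply L d0 hd0, adjoint_d1_comp_d1_apply L d1 hd1,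
    map_sum, ← sum_add_distrib]
  refine sum_congr rfl fun j _ => ?_
  rw [hcomm_apply, map_sub, add_sub_cancel]

end Box

section Unitary

variable {𝕜 H G : Type*} [RCLike 𝕜] [NormedAddCommGroup H] [InnerProductSpace 𝕜 H]
  [CompleteSpace H]

theorem adjoint_map_eq_map_inv [Group G] (ρ : G →* (H →L[𝕜] H))
    (hunit : ∀ γ u v, inner 𝕜 (ρ γ u) (ρ γ v) = inner 𝕜 u v) (γ : G) :
    adjoint (ρ γ) = ρ γ⁻¹ := by
  refine ((eq_adjoint_iff _ _).2 fun u v => ?_).symm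
  rw [← hunit γ, ← mul_apply_eq_comp, ← map_mul, mul_inv_cancel, map_one, one_apply_eq_self]

theorem commute_one_sub_map_adjoint [CommGroup G] (ρ : G →* (H →L[𝕜] H))
    (hunit : ∀ γ u v, inner 𝕜 (ρ γ u) (ρ γ v) = inner 𝕜 u v) (a b : G) :
    Commute (1 - ρ a) (adjoint (1 - ρ b)) := by
  rw [map_sub, adjoint_one, adjoint_map_eq_map_inv ρ hunit]
  exact (Commute.one_left _).sub_left
    ((Commute.one_right _).sub_right ((Commute.all a b⁻¹).map ρ))

end Unitary

theorem stmt_15_general {H : Type*} [NormedAddCommGroup H] [InnerProductSpace ℝ H] [CompleteSpace H]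
    {G : Type*} [CommGroup G] {ν : ℕ}
    (ρ : G →* (H →L[ℝ] H))
    (hunit : ∀ (γ : G) (u v : H), (inner ℝ (ρ γ u) (ρ γ v) : ℝ) = inner ℝ u v)
    (gen : Fin (ν + ν) → G)
    (L : Fin (ν + ν) → H →L[ℝ] H)
    (hL : ∀ (i : Fin (ν + ν)) (v : H), L i v = v - ρ (gen i) v)
    (d0 : H →L[ℝ] PiLp 2 fun _ : Fin (ν + ν) => H)
    (hd0 : ∀ (v : H) (i : Fin (ν + ν)), d0 v i = L i v)
    (d1 : (PiLp 2 fun _ : Fin (ν + ν) => H) →L[ℝ]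
        PiLp 2 fun _ : {q : Fin (ν + ν) × Fin (ν + ν) // q.1 < q.2} => H)
    (hd1 : ∀ (V : PiLp 2 fun _ : Fin (ν + ν) => H)
        (q : {q : Fin (ν + ν) × Fin (ν + ν) // q.1 < q.2}),
        d1 V q = L q.1.2 (V q.1.1) - L q.1.1 (V q.1.2)) :
    ∀ (V : PiLp 2 fun _ : Fin (ν + ν) => H) (i : Fin (ν + ν)),
      (d0 (ContinuousLinearMap.adjoint d0 V) + ContinuousLinearMap.adjoint d1 (d1 V)) i
        = ∑ j, ContinuousLinearMap.adjoint (L j) (L j (V i)) := by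
  have hL_eq : ∀ j, L j = 1 - ρ (gen j) := fun j => ext (hL j)
  refine box_apply_of_commute L (fun a b => ?_) d0 hd0 d1 hd1
  rw [hL_eq, hL_eq]
  exact commute_one_sub_map_adjoint ρ hunit _ _

/-- For an abelian group acting unitarily on a Hilbert space `H`, with
generators `γ_1,…,γ_ν` and the convention `γ_{i+ν} = γ_i⁻¹` (`k = ν + ν`),
`L_i = Id − π(γ_i)_*`, `d0 v = (L_i v)_i` and `d1 V = (L_j v_i − L_i v_j)_{i<j}`, the box
operator acts diagonally: `(□V)_i = (Σ_j L_j* L_j) v_i`. -/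
theorem stmt_15 {H : Type*} [NormedAddCommGroup H] [InnerProductSpace ℝ H] [CompleteSpace H]
    {G : Type*} [CommGroup G] {ν : ℕ}
    (ρ : G →* (H →L[ℝ] H))
    (hunit : ∀ (γ : G) (u v : H), (inner ℝ (ρ γ u) (ρ γ v) : ℝ) = inner ℝ u v)
    (gen : Fin (ν + ν) → G)
    (hconv : ∀ i : Fin ν, gen (Fin.natAdd ν i) = (gen (Fin.castAdd ν i))⁻¹)
    (L : Fin (ν + ν) → H →L[ℝ] H)
    (hL : ∀ (i : Fin (ν + ν)) (v : H), L i v = v - ρ (gen i) v)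
    (d0 : H →L[ℝ] PiLp 2 fun _ : Fin (ν + ν) => H)
    (hd0 : ∀ (v : H) (i : Fin (ν + ν)), d0 v i = L i v)
    (d1 : (PiLp 2 fun _ : Fin (ν + ν) => H) →L[ℝ]
        PiLp 2 fun _ : {q : Fin (ν + ν) × Fin (ν + ν) // q.1 < q.2} => H)
    (hd1 : ∀ (V : PiLp 2 fun _ : Fin (ν + ν) => H)
        (q : {q : Fin (ν + ν) × Fin (ν + ν) // q.1 < q.2}),
        d1 V q = L q.1.2 (V q.1.1) - L q.1.1 (V q.1.2)) :
    ∀ (V : PiLp 2 fun _ : Fin (ν + ν) => H) (i : Fin (ν + ν)),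
      (d0 (ContinuousLinearMap.adjoint d0 V) + ContinuousLinearMap.adjoint d1 (d1 V)) i
        = ∑ j, ContinuousLinearMap.adjoint (L j) (L j (V i)) :=
  stmt_15_general ρ hunit gen L hL d0 hd0 d1 hd1
end

section
/- Let φ, ψ : U → ℂ^n (U ⊆ ℂ^{2n} open containing (z_0, 0)) be holomorphic with ψ(z, ξ) = z + ξ + φ(z, ξ), φ(z, 0) = 0 and D_ξ φ(z, 0) = 0. Then there exist a neighborhood of (z_0, 0, 0) in ℂ^{3n} and a unique holomorphic map ζ = P(z, ξ, η) solving ψ(ψ(z, ξ), η) = ψ(z, ζ), and P has the form ζ = ξ + η + θ(z, ξ, η) where θ is holomorphic and satisfies θ(z, 0, η) = θ(z, ξ, 0) = 0 and ‖D_ξ θ(z, ξ, η)‖ ≤ c |η| for some constant c. -/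
/-!
Holomorphic maps of several variables are `C¹`: by the Schwarz lemma on complex lines, the
derivative on a small ball stays close to the derivative at its centre. Since
`D_ξ ψ (z₀, 0) = id`, the implicit function theorem then gives a holomorphic `g` with
`ψ (z, g (z, w)) = w`, unique near `((z₀, z₀), 0)`, and `P (z, ξ, η) = g (z, ψ (ψ (z, ξ), η))`.
As `ψ (z, 0) = z`, uniqueness yields `P (z, 0, η) = η` and `P (z, ξ, 0) = ξ`. Finally `θ` is
bounded near `(z₀, 0, 0)` and vanishes at `η = 0`, so the Schwarz lemma in `η` gives
`‖θ‖ ≤ C ‖η‖`, and a Cauchy estimate in `ξ` turns this into `‖D_ξ θ‖ ≤ c ‖η‖`.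
-/

open Metric Filter Topology

namespace Complex

variable {E F : Type*} [NormedAddCommGroup E] [NormedSpace ℂ E]
  [NormedAddCommGroup F] [NormedSpace ℂ F]

theorem norm_fderiv_sub_le_of_forall_norm_sub_le {f : E → F} {A : E →L[ℂ] F} {x y : E}
    {r ε : ℝ} (hε : 0 ≤ ε) (hf : DifferentiableOn ℂ f (ball x r))
    (hA : ∀ w ∈ ball x r, ‖f w - f x - A (w - x)‖ ≤ ε * ‖w - x‖) (hy : y ∈ ball x (r / 2)) :
    ‖fderiv ℂ f y - A‖ ≤ 4 * ε := by
  have hr : 0 < r := by linarith [nonempty_ball.mp ⟨y, hy⟩]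
  have hsub : ball y (r / 2) ⊆ ball x r := ball_subset_ball' (by linarith [mem_ball.mp hy])
  have hyx : ‖y - x‖ < r := by linarith [mem_ball_iff_norm.mp hy]
  have hk : DifferentiableOn ℂ (fun w => f w - A w) (ball y (r / 2)) :=
    (hf.mono hsub).sub A.differentiable.differentiableOn
  have hmaps : Set.MapsTo (fun w => f w - A w) (ball y (r / 2))
      (closedBall (f y - A y) (2 * ε * r)) := by
    intro w hw
    have hwx := mem_ball_iff_norm.mp (hsub hw)
    rw [mem_closedBall, dist_eq_norm]
    calc ‖f w - A w - (f y - A y)‖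
        = ‖(f w - f x - A (w - x)) - (f y - f x - A (y - x))‖ := by simp only [map_sub]; abel_nf
      _ ≤ ε * ‖w - x‖ + ε * ‖y - x‖ := (norm_sub_le _ _).trans
          (add_le_add (hA w (hsub hw)) (hA y (hsub (mem_ball_self (by positivity)))))
      _ ≤ 2 * ε * r := by nlinarith
  have hderiv : fderiv ℂ (fun w => f w - A w) y = fderiv ℂ f y - A :=
    ((hf.differentiableAt (isOpen_ball.mem_nhds (hsub (mem_ball_self (by positivity)))))
      |>.hasFDerivAt.sub A.hasFDerivAt).fderiv
  calc ‖fderiv ℂ f y - A‖ ≤ 2 * ε * r / (r / 2) := by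
        rw [← hderiv]; exact norm_fderiv_le_div_of_mapsTo_ball hk hmaps (by positivity)
    _ = 4 * ε := by field_simp; ring

theorem continuousOn_fderiv_of_isOpen {f : E → F} {s : Set E} (hs : IsOpen s)
    (hf : DifferentiableOn ℂ f s) : ContinuousOn (fderiv ℂ f) s := by
  intro x hx
  refine (Metric.continuousAt_iff.2 fun ε hε => ?_).continuousWithinAt
  have happrox : ∀ᶠ w in 𝓝 x, ‖f w - f x - fderiv ℂ f x (w - x)‖ ≤ ε / 8 * ‖w - x‖ :=
    (hf.differentiableAt (hs.mem_nhds hx)).hasFDerivAt.isLittleO.def (by positivity)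
  obtain ⟨r, hr, hball⟩ := eventually_nhds_iff_ball.1 (happrox.and (hs.mem_nhds hx))
  refine ⟨r / 2, by positivity, fun {y} hy => ?_⟩
  rw [dist_eq_norm]
  calc ‖fderiv ℂ f y - fderiv ℂ f x‖ ≤ 4 * (ε / 8) :=
        norm_fderiv_sub_le_of_forall_norm_sub_le (by positivity)
          (hf.mono fun w hw => (hball w hw).2) (fun w hw => (hball w hw).1) hy
    _ < ε := by linarith

theorem contDiffOn_one_of_isOpen {f : E → F} {s : Set E} (hs : IsOpen s)
    (hf : DifferentiableOn ℂ f s) : ContDiffOn ℂ 1 f s :=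
  (contDiffOn_succ_iff_fderiv_of_isOpen (n := 0) hs).2
    ⟨hf, by simp, contDiffOn_zero.2 (continuousOn_fderiv_of_isOpen hs hf)⟩

theorem norm_fderiv_middle_le {X Y : Type*} [NormedAddCommGroup X] [NormedSpace ℂ X]
    [NormedAddCommGroup Y] [NormedSpace ℂ Y] {θ : E × X × Y → F} {z₀ : E} {x₀ : X} {r M : ℝ}
    (hθ : DifferentiableOn ℂ θ (ball (z₀, x₀, 0) r))
    (hM : ∀ p ∈ ball (z₀, x₀, 0) r, ‖θ p‖ ≤ M)
    (h0 : ∀ p ∈ ball (z₀, x₀, 0) r, p.2.2 = 0 → θ p = 0)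
    {p : E × X × Y} (hp : p ∈ ball (z₀, x₀, 0) (r / 2)) :
    ‖fderiv ℂ (fun x => θ (p.1, x, p.2.2)) p.2.1‖ ≤ 4 * M / r ^ 2 * ‖p.2.2‖ := by
  have hr : 0 < r := by linarith [nonempty_ball.mp ⟨p, hp⟩]
  simp only [mem_ball, Prod.dist_eq, max_lt_iff, dist_zero_right] at hp
  have hlast : ∀ q ∈ ball (z₀, x₀, 0) r, ‖θ q‖ ≤ M / r * ‖q.2.2‖ := by
    intro q hq
    simp only [mem_ball, Prod.dist_eq, max_lt_iff] at hq
    have hmem : Set.MapsTo (fun y : Y => (q.1, q.2.1, y)) (ball 0 r) (ball (z₀, x₀, 0) r) := by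
      intro y hy
      simp only [mem_ball, Prod.dist_eq, max_lt_iff] at hy ⊢
      exact ⟨hq.1, hq.2.1, hy⟩
    have hq0 : θ (q.1, q.2.1, 0) = 0 := h0 _ (hmem (mem_ball_self hr)) rfl
    have hmaps : Set.MapsTo (fun y => θ (q.1, q.2.1, y)) (ball 0 r)
        (closedBall (θ (q.1, q.2.1, 0)) M) := fun y hy => by
      rw [mem_closedBall, hq0, dist_zero_right]; exact hM _ (hmem hy)
    simpa [hq0] using dist_le_div_mul_dist_of_mapsTo_ball (hθ.comp (by fun_prop) hmem)
      hmaps (mem_ball.2 hq.2.2)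
  have hmem : Set.MapsTo (fun x : X => (p.1, x, p.2.2)) (ball p.2.1 (r / 2))
      (ball (z₀, x₀, 0) r) := by
    intro x hx
    simp only [mem_ball, Prod.dist_eq, max_lt_iff, dist_zero_right] at hx ⊢
    exact ⟨by linarith, by linarith [dist_triangle x p.2.1 x₀], by linarith⟩
  have hmaps : Set.MapsTo (fun x => θ (p.1, x, p.2.2)) (ball p.2.1 (r / 2))
      (closedBall (θ (p.1, p.2.1, p.2.2)) (2 * (M / r * ‖p.2.2‖))) := by
    intro x hx
    rw [mem_closedBall, dist_eq_norm, two_mul]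
    exact (norm_sub_le _ _).trans (add_le_add (hlast _ (hmem hx))
      (hlast _ (hmem (mem_ball_self (by positivity)))))
  calc ‖fderiv ℂ (fun x => θ (p.1, x, p.2.2)) p.2.1‖ ≤ 2 * (M / r * ‖p.2.2‖) / (r / 2) :=
        norm_fderiv_le_div_of_mapsTo_ball (hθ.comp (by fun_prop) hmem) hmaps (by positivity)
    _ = 4 * M / r ^ 2 * ‖p.2.2‖ := by field_simp; ring

end Complex

section ImplicitFunction

variable {𝕜 : Type*} [RCLike 𝕜] {E F : Type*} [NormedAddCommGroup E] [NormedSpace 𝕜 E]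
  [CompleteSpace E] [NormedAddCommGroup F] [NormedSpace 𝕜 F] [CompleteSpace F]

theorem ContDiffAt.exists_localInverse_snd {ψ : E × F → F} {x₀ : E × F}
    (hψ : ContDiffAt 𝕜 1 ψ x₀) (hinv : (fderiv 𝕜 ψ x₀ ∘L .inr 𝕜 E F).IsInvertible) :
    ∃ g : E × F → F, g (x₀.1, ψ x₀) = x₀.2 ∧
      (∀ᶠ y in 𝓝 (x₀.1, ψ x₀), DifferentiableAt 𝕜 g y ∧ ψ (y.1, g y) = y.2) ∧
      ∀ᶠ v in 𝓝 ((x₀.1, ψ x₀), x₀.2), ψ (v.1.1, v.2) = v.1.2 → g v.1 = v.2 := by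
  set f : (E × F) × F → F := fun v => ψ (v.1.1, v.2) - v.1.2
  set u : (E × F) × F := ((x₀.1, ψ x₀), x₀.2)
  have hfu : f u = 0 := sub_self _
  have hf : ContDiffAt 𝕜 1 f u :=
    (hψ.comp u (contDiffAt_fst.fst.prodMk contDiffAt_snd)).sub contDiffAt_fst.snd
  have hf' : fderiv 𝕜 f u ∘L .inr 𝕜 (E × F) F = fderiv 𝕜 ψ x₀ ∘L .inr 𝕜 E F := by
    have hd : HasFDerivAt f (fderiv 𝕜 ψ x₀ ∘L ((.fst 𝕜 E F ∘L .fst _ _ _).prod (.snd _ _ _))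
        - .snd 𝕜 E F ∘L .fst _ _ _) u :=
      ((hψ.differentiableAt one_ne_zero).hasFDerivAt.comp u
        (hasFDerivAt_fst.fst.prodMk hasFDerivAt_snd)).sub hasFDerivAt_fst.snd
    rw [hd.fderiv]
    ext ζ; simp
  rw [← hf'] at hinv
  refine ⟨hf.implicitFunction one_ne_zero hinv, hf.implicitFunction_apply_self one_ne_zero hinv,
    ?_, ?_⟩
  · filter_upwards [(hf.contDiffAt_implicitFunction one_ne_zero hinv).eventually (by simp),
      hf.eventually_apply_implicitFunction one_ne_zero hinv] with y hg hgy
    exact ⟨hg.differentiableAt one_ne_zero, sub_eq_zero.1 (hgy.trans hfu)⟩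
  · filter_upwards [hf.eventually_apply_eq_iff_implicitFunction one_ne_zero hinv] with v hv hψv
    exact hv.1 ((sub_eq_zero.2 hψv).trans hfu.symm)

end ImplicitFunction

section CompositionLaw

variable {E : Type*} [NormedAddCommGroup E] [NormedSpace ℂ E]
  {U : Set (E × E)} {z₀ : E} {φ ψ : E × E → E}

theorem fderiv_comp_inr_eq_id (hψ : DifferentiableAt ℂ ψ (z₀, 0))
    (hφ : DifferentiableAt ℂ φ (z₀, 0)) (hsum : ∀ᶠ p in 𝓝 (z₀, 0), ψ p = p.1 + p.2 + φ p)
    (hDφ : fderiv ℂ (fun ξ : E => φ (z₀, ξ)) 0 = 0) :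
    fderiv ℂ ψ (z₀, 0) ∘L .inr ℂ E E = .id ℂ E := by
  have hslice : Tendsto (fun ξ : E => (z₀, ξ)) (𝓝 0) (𝓝 (z₀, 0)) :=
    (Continuous.prodMk_right z₀).tendsto 0
  have hφslice : HasFDerivAt (fun ξ : E => φ (z₀, ξ)) 0 0 :=
    hDφ ▸ (hφ.comp (0 : E) (differentiableAt_const z₀ |>.prodMk differentiableAt_id)).hasFDerivAt
  have hsum' : HasFDerivAt (fun ξ : E => ψ (z₀, ξ)) (.id ℂ E) 0 := by
    have := ((hasFDerivAt_id (0 : E)).const_add z₀).add hφslice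
    rw [add_zero] at this
    exact this.congr_of_eventuallyEq ((hslice.eventually hsum).mono fun ξ h => by simp [h])
  exact ((hψ.hasFDerivAt.comp (0 : E) (hasFDerivAt_prodMk_right z₀ 0))).unique hsum'

theorem exists_localInverse_snd_of_differentiableOn [CompleteSpace E] (hU : IsOpen U)
    (hz₀ : (z₀, 0) ∈ U) (hφ : DifferentiableOn ℂ φ U) (hψ : DifferentiableOn ℂ ψ U)
    (hsum : ∀ p ∈ U, ψ p = p.1 + p.2 + φ p) (hφ0 : φ (z₀, 0) = 0)
    (hDφ0 : fderiv ℂ (fun ξ : E => φ (z₀, ξ)) 0 = 0) :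
    ∃ g : E × E → E,
      (∀ᶠ y in 𝓝 (z₀, z₀), DifferentiableAt ℂ g y ∧ (y.1, g y) ∈ U ∧ ψ (y.1, g y) = y.2) ∧
      (∀ᶠ q in 𝓝 (z₀, 0), g (q.1, ψ q) = q.2) ∧
      ∀ᶠ v in 𝓝 ((z₀, z₀), 0), ψ (v.1.1, v.2) = v.1.2 → g v.1 = v.2 := by
  have hUz₀ : U ∈ 𝓝 (z₀, 0) := hU.mem_nhds hz₀
  have hψz₀ : ψ (z₀, 0) = z₀ := by rw [hsum _ hz₀, hφ0, add_zero, add_zero]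
  have hinv : (fderiv ℂ ψ (z₀, 0) ∘L .inr ℂ E E).IsInvertible := by
    rw [fderiv_comp_inr_eq_id (hψ.differentiableAt hUz₀) (hφ.differentiableAt hUz₀)
      (eventually_of_mem hUz₀ hsum) hDφ0]
    exact ⟨.refl ℂ E, rfl⟩
  obtain ⟨g, hg0, hg, hguniq⟩ :=
    ((Complex.contDiffOn_one_of_isOpen hU hψ).contDiffAt hUz₀).exists_localInverse_snd hinv
  dsimp only at hg0 hg hguniq
  rw [hψz₀] at hg0 hg hguniq
  have hgU : Tendsto (fun y : E × E => (y.1, g y)) (𝓝 (z₀, z₀)) (𝓝 (z₀, 0)) := by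
    simpa [ContinuousAt, hg0] using continuousAt_fst.prodMk hg.self_of_nhds.1.continuousAt
  have hψc : Tendsto ψ (𝓝 (z₀, 0)) (𝓝 z₀) := by
    simpa only [ContinuousAt, hψz₀] using (hψ.differentiableAt hUz₀).continuousAt
  have hgraph : Tendsto (fun q : E × E => ((q.1, ψ q), q.2)) (𝓝 (z₀, 0)) (𝓝 ((z₀, z₀), 0)) :=
    ((continuous_fst.tendsto _).prodMk_nhds hψc).prodMk_nhds (continuous_snd.tendsto _)
  refine ⟨g, ?_, (hgraph.eventually hguniq).mono fun q hq => hq rfl, hguniq⟩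
  filter_upwards [hg, hgU.eventually_mem hUz₀] with y ⟨hgd, hgy⟩ hyU
  exact ⟨hgd, hyU, hgy⟩

theorem exists_composition_correction [CompleteSpace E] (hU : IsOpen U) (hz₀ : (z₀, 0) ∈ U)
    (hφ : DifferentiableOn ℂ φ U) (hψ : DifferentiableOn ℂ ψ U)
    (hsum : ∀ p ∈ U, ψ p = p.1 + p.2 + φ p) (hφ0 : ∀ z : E, (z, 0) ∈ U → φ (z, 0) = 0)
    (hDφ0 : fderiv ℂ (fun ξ : E => φ (z₀, ξ)) 0 = 0) :
    ∃ θ : E × E × E → E,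
      (∀ᶠ p in 𝓝 (z₀, 0, 0), DifferentiableAt ℂ θ p ∧
        ((p.1, p.2.1) ∈ U ∧ (ψ (p.1, p.2.1), p.2.2) ∈ U ∧ (p.1, p.2.1 + p.2.2 + θ p) ∈ U ∧
          ψ (ψ (p.1, p.2.1), p.2.2) = ψ (p.1, p.2.1 + p.2.2 + θ p)) ∧
        (p.2.1 = 0 → θ p = 0) ∧ (p.2.2 = 0 → θ p = 0)) ∧
      ∀ P : E × E × E → E, ContinuousAt P (z₀, 0, 0) → P (z₀, 0, 0) = 0 →
        ∀ᶠ p in 𝓝 (z₀, 0, 0), ψ (ψ (p.1, p.2.1), p.2.2) = ψ (p.1, P p) →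
          P p = p.2.1 + p.2.2 + θ p := by
  have hUz₀ : U ∈ 𝓝 (z₀, 0) := hU.mem_nhds hz₀
  have hψ0 : ∀ z : E, (z, 0) ∈ U → ψ (z, 0) = z := fun z hz => by
    rw [hsum _ hz, hφ0 z hz, add_zero, add_zero]
  obtain ⟨g, hg, hleft, hguniq⟩ :=
    exists_localInverse_snd_of_differentiableOn hU hz₀ hφ hψ hsum (hφ0 z₀ hz₀) hDφ0
  set G : E × E × E → E × E := fun p => (p.1, ψ (ψ (p.1, p.2.1), p.2.2))
  set θ : E × E × E → E := fun p => g (G p) - p.2.1 - p.2.2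
  have hθG : ∀ p, p.2.1 + p.2.2 + θ p = g (G p) := fun p => by simp only [θ]; abel
  have hψc : Tendsto ψ (𝓝 (z₀, 0)) (𝓝 z₀) := by
    simpa only [ContinuousAt, hψ0 z₀ hz₀] using (hψ.differentiableAt hUz₀).continuousAt
  have h₁ : Tendsto (fun p : E × E × E => (p.1, p.2.1)) (𝓝 (z₀, 0, 0)) (𝓝 (z₀, 0)) :=
    (continuous_fst.prodMk continuous_snd.fst).tendsto' _ _ rfl
  have h₂ : Tendsto (fun p : E × E × E => (ψ (p.1, p.2.1), p.2.2)) (𝓝 (z₀, 0, 0))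
      (𝓝 (z₀, 0)) :=
    (hψc.comp h₁).prodMk_nhds (continuous_snd.snd.tendsto' _ _ rfl)
  have h₃ : Tendsto (fun p : E × E × E => (p.1, p.2.2)) (𝓝 (z₀, 0, 0)) (𝓝 (z₀, 0)) :=
    (continuous_fst.prodMk continuous_snd.snd).tendsto' _ _ rfl
  have hG : Tendsto G (𝓝 (z₀, 0, 0)) (𝓝 (z₀, z₀)) :=
    (continuous_fst.tendsto _).prodMk_nhds (hψc.comp h₂)
  refine ⟨θ, ?_, fun P hP hP0 => ?_⟩
  · filter_upwards [h₁.eventually_mem hUz₀, h₂.eventually_mem hUz₀, hG.eventually hg,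
      h₁.eventually hleft, h₃.eventually hleft] with p hp₁ hp₂ ⟨hgd, hgU, hgψ⟩ hleft₁ hleft₃
    have hψ₁ := hψ.differentiableAt (hU.mem_nhds hp₁)
    have hψ₂ := hψ.differentiableAt (hU.mem_nhds hp₂)
    refine ⟨by fun_prop (disch := assumption), ⟨hp₁, hp₂, hθG p ▸ hgU, hθG p ▸ hgψ.symm⟩,
      fun h => ?_, fun h => ?_⟩
    · simp only [θ, G]
      rw [h, hψ0 _ (h ▸ hp₁), hleft₃, sub_zero, sub_self]
    · simp only [θ, G]
      rw [h, hψ0 _ (h ▸ hp₂), hleft₁, sub_zero, sub_self]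
  · have hP' : Tendsto P (𝓝 (z₀, 0, 0)) (𝓝 0) := by simpa only [hP0] using hP.tendsto
    filter_upwards [(hG.prodMk_nhds hP').eventually hguniq] with p hp hsol
    rw [hθG]
    exact (hp hsol.symm).symm

end CompositionLaw

/-- Holomorphic composition law for the complexified exponential map. If
`ψ(z,ξ) = z + ξ + φ(z,ξ)` is holomorphic near `(z₀, 0)` with `φ(z,0) = 0` and
`D_ξ φ(z,0) = 0`, then near `(z₀,0,0)` there is a unique holomorphic solution
`ζ = P(z,ξ,η)` of `ψ(ψ(z,ξ),η) = ψ(z,ζ)`, of the form `ζ = ξ + η + θ(z,ξ,η)` with `θ`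
holomorphic, `θ(z,0,η) = θ(z,ξ,0) = 0` and `‖D_ξ θ(z,ξ,η)‖ ≤ c|η|`. -/
theorem stmt_19 (n : ℕ)
    (U : Set ((Fin n → ℂ) × (Fin n → ℂ))) (hU : IsOpen U)
    (z₀ : Fin n → ℂ) (hz₀ : (z₀, (0 : Fin n → ℂ)) ∈ U)
    (φ ψ : (Fin n → ℂ) × (Fin n → ℂ) → (Fin n → ℂ))
    (hφ : DifferentiableOn ℂ φ U) (hψ : DifferentiableOn ℂ ψ U)
    (hsum : ∀ p ∈ U, ψ p = p.1 + p.2 + φ p)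
    (hφ0 : ∀ z : Fin n → ℂ, (z, (0 : Fin n → ℂ)) ∈ U → φ (z, 0) = 0)
    (hDφ0 : ∀ z : Fin n → ℂ, (z, (0 : Fin n → ℂ)) ∈ U →
      fderiv ℂ (fun ξ : Fin n → ℂ => φ (z, ξ)) 0 = 0) :
    ∃ W : Set ((Fin n → ℂ) × (Fin n → ℂ) × (Fin n → ℂ)), IsOpen W ∧
      (z₀, (0 : Fin n → ℂ), (0 : Fin n → ℂ)) ∈ W ∧
      ∃ θ : (Fin n → ℂ) × (Fin n → ℂ) × (Fin n → ℂ) → (Fin n → ℂ),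
        DifferentiableOn ℂ θ W ∧
        (∀ p ∈ W, (p.1, p.2.1) ∈ U ∧ (ψ (p.1, p.2.1), p.2.2) ∈ U ∧
          (p.1, p.2.1 + p.2.2 + θ p) ∈ U ∧
          ψ (ψ (p.1, p.2.1), p.2.2) = ψ (p.1, p.2.1 + p.2.2 + θ p)) ∧
        (∀ p ∈ W, p.2.1 = 0 → θ p = 0) ∧
        (∀ p ∈ W, p.2.2 = 0 → θ p = 0) ∧
        (∃ c : ℝ, 0 ≤ c ∧ ∀ p ∈ W,
          ‖fderiv ℂ (fun ξ : Fin n → ℂ => θ (p.1, ξ, p.2.2)) p.2.1‖ ≤ c * ‖p.2.2‖) ∧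
        ∀ P' : (Fin n → ℂ) × (Fin n → ℂ) × (Fin n → ℂ) → (Fin n → ℂ),
          ContinuousOn P' W → P' (z₀, 0, 0) = 0 →
          (∀ p ∈ W, (p.1, P' p) ∈ U ∧
            ψ (ψ (p.1, p.2.1), p.2.2) = ψ (p.1, P' p)) →
          ∃ W' ⊆ W, IsOpen W' ∧ (z₀, (0 : Fin n → ℂ), (0 : Fin n → ℂ)) ∈ W' ∧
            Set.EqOn P' (fun p => p.2.1 + p.2.2 + θ p) W' := by
  obtain ⟨θ, hθ, huniq⟩ := exists_composition_correction hU hz₀ hφ hψ hsum hφ0 (hDφ0 z₀ hz₀)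
  have hbound : ∀ᶠ p in 𝓝 (z₀, 0, 0), ‖θ p‖ ≤ 1 := by
    have hlt : ‖θ (z₀, 0, 0)‖ < 1 := by simp [hθ.self_of_nhds.2.2.1 rfl]
    exact (hθ.self_of_nhds.1.continuousAt.norm.eventually (gt_mem_nhds hlt)).mono fun p hp => hp.le
  obtain ⟨r, hr, hball⟩ := eventually_nhds_iff_ball.1 (hθ.and hbound)
  have hsub : ball (z₀, (0 : Fin n → ℂ), (0 : Fin n → ℂ)) (r / 2) ⊆ ball (z₀, 0, 0) r :=
    ball_subset_ball (by linarith)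
  refine ⟨ball (z₀, 0, 0) (r / 2), isOpen_ball, mem_ball_self (by positivity), θ,
    fun p hp => (hball p (hsub hp)).1.1.differentiableWithinAt,
    fun p hp => (hball p (hsub hp)).1.2.1, fun p hp => (hball p (hsub hp)).1.2.2.1,
    fun p hp => (hball p (hsub hp)).1.2.2.2, ⟨4 / r ^ 2, by positivity, fun p hp => ?_⟩, ?_⟩
  · simpa using Complex.norm_fderiv_middle_le (M := 1)
      (fun p hp => (hball p hp).1.1.differentiableWithinAt) (fun p hp => (hball p hp).2)
      (fun p hp => (hball p hp).1.2.2.2) hp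
  · intro P hP hP0 hsol
    obtain ⟨t, ht, hto, htc⟩ := _root_.eventually_nhds_iff.1
      (huniq P (hP.continuousAt (isOpen_ball.mem_nhds (mem_ball_self (by positivity)))) hP0)
    exact ⟨ball (z₀, 0, 0) (r / 2) ∩ t, Set.inter_subset_left, isOpen_ball.inter hto,
      ⟨mem_ball_self (by positivity), htc⟩, fun p hp => ht p hp.2 (hsol p hp.1).2⟩
end
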